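/- Let r ∈ ℂ and F ∈ A_r(Γ,v). The function ℂQ_F on ℍ defined by (𝒞Q_F)(z) = conj(Q_F(z̄)), with Q_F as above, is (2 - r̄)-harmonic on ℍ, and ξ_{2-r̄}(𝒞Q_F)(z) = 2^{r-1} e^{πi(r-1)/2} F(z). -/

import Mathlib

open Complex

noncomputable def mdenom (g : Matrix.SpecialLinearGroup (Fin 2) ℝ) (z : ℂ) : ℂ :=
  (g.1 1 0 : ℂ) * z + (g.1 1 1 : ℂ)

noncomputable def mact (g : Matrix.SpecialLinearGroup (Fin 2) ℝ) (z : ℂ) : ℂ :=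
  ((g.1 0 0 : ℂ) * z + (g.1 0 1 : ℂ)) / mdenom g z

/-- The integral `∫_{w₁}^{w₂} (z - t)^(r-2) F z dz` along the straight segment. -/
noncomputable def segInt (r : ℂ) (F : ℂ → ℂ) (w₁ w₂ t : ℂ) : ℂ :=
  ∫ s in (0:ℝ)..1,
    (w₂ - w₁) * ((w₁ + (s : ℂ) * (w₂ - w₁) - t) ^ (r - 2)) *
      F (w₁ + (s : ℂ) * (w₂ - w₁))

noncomputable def wderivBar (F : ℂ → ℂ) (z : ℂ) : ℂ :=
  (fderiv ℝ F z 1 + Complex.I * fderiv ℝ F z Complex.I) / 2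

noncomputable def wderiv (F : ℂ → ℂ) (z : ℂ) : ℂ :=
  (fderiv ℝ F z 1 - Complex.I * fderiv ℝ F z Complex.I) / 2

noncomputable def hlaplacian (r : ℂ) (F : ℂ → ℂ) (z : ℂ) : ℂ :=
  -4 * (z.im : ℂ) ^ 2 * wderiv (fun w => wderivBar F w) z +
    2 * Complex.I * r * (z.im : ℂ) * wderivBar F z

noncomputable def shadowOp (r : ℂ) (F : ℂ → ℂ) (z : ℂ) : ℂ :=
  2 * Complex.I * ((z.im : ℂ) ^ (starRingEnd ℂ r)) * (starRingEnd ℂ) (wderivBar F z)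

/-!
Write `H w = ∫_{z₀}^{w} (τ - w̄)^(r-2) F τ dτ`, so that `𝒞Q_F = conj ∘ H`. Along the segment
`ℓ s = z₀ + s (w - z₀)`, the `∂_w`-derivative of the integrand is the `s`-derivative of
`s (ℓ s - w̄)^(r-2) F (ℓ s)`; differentiating under the integral sign and applying the fundamental
theorem of calculus gives `∂H = (w - w̄)^(r-2) F w`, hence `∂̄(𝒞Q_F) = conj ((2iy)^(r-2) F)`.
Then `∂∂̄(𝒞Q_F)` is the conjugate of `∂̄((w - w̄)^(r-2) F)`, where by holomorphy of `F` only the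
power is differentiated, and the two terms of `Δ_{2-r̄}` cancel. The shadow is
`2i y^(2-r) (2iy)^(r-2) F = 2^(r-1) e^(πi(r-1)/2) F`.
-/

open ComplexConjugate MeasureTheory Set Filter Topology Function Interval

theorem hasFDerivAt_intervalIntegral_of_continuousOn {E G : Type*} [NormedAddCommGroup E]
    [NormedSpace ℝ E] [LocallyCompactSpace E] [NormedAddCommGroup G] [NormedSpace ℝ G]
    {f : E → ℝ → G} {f' : E → ℝ → E →L[ℝ] G} {U : Set E} {a b : ℝ} (hab : a ≤ b) (hU : IsOpen U)
    (hf : ContinuousOn (uncurry f) (U ×ˢ Icc a b))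
    (hf' : ContinuousOn (uncurry f') (U ×ˢ Icc a b))
    (hderiv : ∀ x ∈ U, ∀ t ∈ Icc a b, HasFDerivAt (f · t) (f' x t) x) {x₀ : E} (hx₀ : x₀ ∈ U) :
    HasFDerivAt (fun x => ∫ t in a..b, f x t) (∫ t in a..b, f' x₀ t) x₀ := by
  have hΙ : Ι a b ⊆ Icc a b := uIoc_of_le hab ▸ Ioc_subset_Icc_self
  obtain ⟨K, hK, hx₀K, hKU⟩ := exists_compact_subset hU hx₀
  obtain ⟨C, hC⟩ := (hK.prod isCompact_Icc).exists_bound_of_continuousOn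
    (hf'.mono (prod_mono hKU subset_rfl))
  refine intervalIntegral.hasFDerivAt_integral_of_dominated_of_fderiv_le (bound := fun _ => C)
    (interior_mem_nhds.2 (mem_interior_iff_mem_nhds.1 hx₀K)) ?_
    ((hf.uncurry_left x₀ hx₀).intervalIntegrable_of_Icc hab)
    (((hf'.uncurry_left x₀ hx₀).mono hΙ).aestronglyMeasurable measurableSet_uIoc)
    ?_ intervalIntegrable_const ?_
  · filter_upwards [hU.mem_nhds hx₀] with x hx using
      ((hf.uncurry_left x hx).mono hΙ).aestronglyMeasurable measurableSet_uIoc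
  · exact ae_of_all _ fun t ht x hx => hC (x, t) ⟨interior_subset hx, hΙ ht⟩
  · exact ae_of_all _ fun t ht x hx => hderiv x (hKU (interior_subset hx)) t (hΙ ht)

noncomputable def wirtingerCLM (a b : ℂ) : ℂ →L[ℝ] ℂ :=
  a • ContinuousLinearMap.id ℝ ℂ + b • conjCLE.toContinuousLinearMap

section Wirtinger

variable {f g : ℂ → ℂ} {a b c d z : ℂ}

@[simp]
lemma wirtingerCLM_apply (h : ℂ) : wirtingerCLM a b h = a * h + b * conj h := rfl

lemma wirtingerCLM_sub : wirtingerCLM a b - wirtingerCLM c d = wirtingerCLM (a - c) (b - d) := by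
  ext1 h
  simp only [FunLike.coe_sub, Pi.sub_apply, wirtingerCLM_apply]
  ring

lemma continuous_wirtingerCLM : Continuous fun p : ℂ × ℂ => wirtingerCLM p.1 p.2 := by
  unfold wirtingerCLM
  fun_prop

lemma ContinuousOn.wirtingerCLM {X : Type*} [TopologicalSpace X] {A B : X → ℂ} {S : Set X}
    (hA : ContinuousOn A S) (hB : ContinuousOn B S) :
    ContinuousOn (fun x => wirtingerCLM (A x) (B x)) S :=
  continuous_wirtingerCLM.comp_continuousOn (hA.prodMk hB)

lemma intervalIntegral_wirtingerCLM {A B : ℝ → ℂ} {s t : ℝ}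
    (hA : IntervalIntegrable A volume s t) (hB : IntervalIntegrable B volume s t) :
    ∫ u in s..t, wirtingerCLM (A u) (B u) =
      wirtingerCLM (∫ u in s..t, A u) (∫ u in s..t, B u) := by
  simp only [wirtingerCLM]
  rw [intervalIntegral.integral_add (hA.smul_continuousOn continuousOn_const)
      (hB.smul_continuousOn continuousOn_const),
    intervalIntegral.integral_smul_const, intervalIntegral.integral_smul_const]

lemma Filter.EventuallyEq.wderiv_eq (h : f =ᶠ[𝓝 z] g) : wderiv f z = wderiv g z := by
  simp only [wderiv, h.fderiv_eq]

lemma HasFDerivAt.wderiv_eq (h : HasFDerivAt f (wirtingerCLM a b) z) : wderiv f z = a := by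
  simp only [wderiv, h.fderiv, wirtingerCLM_apply, map_one, conj_I]
  ring_nf
  simp only [I_sq]
  ring

lemma HasFDerivAt.wderivBar_eq (h : HasFDerivAt f (wirtingerCLM a b) z) : wderivBar f z = b := by
  simp only [wderivBar, h.fderiv, wirtingerCLM_apply, map_one, conj_I]
  ring_nf
  simp only [I_sq]
  ring

lemma wderivBar_conj (f : ℂ → ℂ) (z : ℂ) :
    wderivBar (fun w => conj (f w)) z = conj (wderiv f z) := by
  have h : fderiv ℝ (fun w => conj (f w)) z = conjCLE.toContinuousLinearMap ∘L fderiv ℝ f z :=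
    conjCLE.comp_fderiv
  simp only [wderivBar, wderiv, h, ContinuousLinearMap.comp_apply, ContinuousLinearEquiv.coe_coe,
    conjCLE_apply, map_div₀, map_sub, map_mul, map_ofNat, conj_I]
  ring

lemma wderiv_conj (f : ℂ → ℂ) (z : ℂ) :
    wderiv (fun w => conj (f w)) z = conj (wderivBar f z) := by
  have h : fderiv ℝ (fun w => conj (f w)) z = conjCLE.toContinuousLinearMap ∘L fderiv ℝ f z :=
    conjCLE.comp_fderiv
  simp only [wderivBar, wderiv, h, ContinuousLinearMap.comp_apply, ContinuousLinearEquiv.coe_coe,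
    conjCLE_apply, map_div₀, map_add, map_mul, map_ofNat, conj_I]
  ring

lemma HasDerivAt.hasFDerivAt_wirtingerCLM (h : HasDerivAt f a z) :
    HasFDerivAt f (wirtingerCLM a 0) z := by
  refine (h.hasFDerivAt.restrictScalars ℝ).congr_fderiv ?_
  ext1 h
  simp [mul_comm]

lemma hasFDerivAt_conj_wirtingerCLM : HasFDerivAt (fun w => conj w) (wirtingerCLM 0 1) z := by
  refine conjCLE.toContinuousLinearMap.hasFDerivAt.congr_fderiv ?_
  ext1 h
  simp

lemma HasFDerivAt.mul_wirtingerCLM (hf : HasFDerivAt f (wirtingerCLM a b) z)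
    (hg : HasFDerivAt g (wirtingerCLM c d) z) :
    HasFDerivAt (fun w => f w * g w)
      (wirtingerCLM (f z * c + g z * a) (f z * d + g z * b)) z := by
  refine (hf.mul hg).congr_fderiv ?_
  ext1 h
  simp
  ring

lemma HasDerivAt.comp_hasFDerivAt_wirtingerCLM {g' : ℂ} (z : ℂ) (hg : HasDerivAt g g' (f z))
    (hf : HasFDerivAt f (wirtingerCLM a b) z) :
    HasFDerivAt (fun w => g (f w)) (wirtingerCLM (g' * a) (g' * b)) z := by
  refine ((hg.hasFDerivAt.restrictScalars ℝ).comp z hf).congr_fderiv ?_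
  ext1 h
  simp
  ring

end Wirtinger

abbrev upperHalfSet : Set ℂ := {z | 0 < z.im}

lemma isOpen_upperHalfSet : IsOpen upperHalfSet := isOpen_lt continuous_const continuous_im

lemma sub_conj_mem_slitPlane {z : ℂ} (hz : z ∈ upperHalfSet) : z - conj z ∈ slitPlane := by
  have hz' : 0 < z.im := hz
  refine mem_slitPlane_iff.2 (Or.inr (ne_of_gt ?_))
  simp only [sub_im, conj_im]
  linarith

lemma hlaplacian_eq_zero_of_wderivBar {G : ℂ → ℂ} {r a z : ℂ} (hz : 0 < z.im)
    (h₁ : wderivBar G z = conj ((z - conj z) ^ (r - 2) * a))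
    (h₂ : wderiv (wderivBar G) z = conj (-((r - 2) * (z - conj z) ^ (r - 3) * a))) :
    hlaplacian (2 - conj r) G z = 0 := by
  have hsplit : (z - conj z) ^ (r - 2) = (z - conj z) ^ (r - 3) * (z - conj z) := by
    rw [show r - 2 = r - 3 + 1 by ring,
      cpow_add _ _ (slitPlane_ne_zero (sub_conj_mem_slitPlane hz)), cpow_one]
  rw [hlaplacian, h₁, h₂, hsplit, sub_conj]
  simp only [map_mul, map_neg, map_sub, map_ofNat, conj_ofReal, conj_I]
  push_cast
  ring_nf
  simp only [I_sq]
  ring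

lemma two_mul_I_mul_cpow_mul_cpow {y : ℝ} (hy : 0 < y) (r : ℂ) :
    2 * I * (y : ℂ) ^ (2 - r) * (((2 * y : ℝ) : ℂ) * I) ^ (r - 2) =
      2 ^ (r - 1) * exp (Real.pi * I * (r - 1) / 2) := by
  have hlog2 : log (2 : ℂ) = Real.log 2 := by simp [ofReal_log zero_le_two]
  have hlog : log (((2 * y : ℝ) : ℂ) * I) = Real.log 2 + Real.log y + Real.pi / 2 * I := by
    rw [log_ofReal_mul (by positivity) I_ne_zero, log_I, Real.log_mul two_ne_zero hy.ne']
    push_cast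
    ring
  have h2I : (2 * I : ℂ) = exp (Real.log 2 + Real.pi / 2 * I) := by
    rw [exp_add, exp_pi_div_two_mul_I, ← hlog2, exp_log two_ne_zero]
  have h2yI : ((2 * y : ℝ) : ℂ) * I ≠ 0 :=
    mul_ne_zero (ofReal_ne_zero.2 (by positivity)) I_ne_zero
  rw [h2I, cpow_def_of_ne_zero (ofReal_ne_zero.2 hy.ne'), cpow_def_of_ne_zero h2yI, hlog,
    cpow_def_of_ne_zero two_ne_zero, hlog2, ← ofReal_log hy.le, ← exp_add, ← exp_add, ← exp_add]
  congr 1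
  ring

lemma shadowOp_eq_of_wderivBar {G : ℂ → ℂ} {r a z : ℂ} (hz : 0 < z.im)
    (h : wderivBar G z = conj ((z - conj z) ^ (r - 2) * a)) :
    shadowOp (2 - conj r) G z = 2 ^ (r - 1) * exp (Real.pi * I * (r - 1) / 2) * a := by
  rw [shadowOp, h, conj_conj, map_sub, map_ofNat, conj_conj, sub_conj, ← mul_assoc,
    two_mul_I_mul_cpow_mul_cpow hz]

section PeriodIntegral

variable (r : ℂ) (F : ℂ → ℂ) (z₀ : ℂ)

noncomputable def segPoint (w : ℂ) (s : ℝ) : ℂ := z₀ + s * (w - z₀)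

noncomputable def periodIntegrand (w : ℂ) (s : ℝ) : ℂ :=
  (w - z₀) * (segPoint z₀ w s - conj w) ^ (r - 2) * F (segPoint z₀ w s)

noncomputable def periodIntegrandDz (w : ℂ) (s : ℝ) : ℂ :=
  (segPoint z₀ w s - conj w) ^ (r - 2) * F (segPoint z₀ w s) +
    s * (w - z₀) * ((r - 2) * (segPoint z₀ w s - conj w) ^ (r - 3) * F (segPoint z₀ w s) +
      (segPoint z₀ w s - conj w) ^ (r - 2) * deriv F (segPoint z₀ w s))

noncomputable def periodIntegrandDzbar (w : ℂ) (s : ℝ) : ℂ :=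
  -((r - 2) * (w - z₀) * (segPoint z₀ w s - conj w) ^ (r - 3) * F (segPoint z₀ w s))

variable {z₀}

lemma segPoint_mem (hz₀ : z₀ ∈ upperHalfSet) {w : ℂ} (hw : w ∈ upperHalfSet) {s : ℝ}
    (hs : s ∈ Icc (0 : ℝ) 1) :
    segPoint z₀ w s ∈ upperHalfSet := by
  simpa [segPoint, real_smul] using (convex_halfSpace_im_gt 0).add_smul_sub_mem hz₀ hw hs

lemma segPoint_sub_conj_mem_slitPlane (hz₀ : z₀ ∈ upperHalfSet) {w : ℂ} (hw : w ∈ upperHalfSet)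
    {s : ℝ} (hs : s ∈ Icc (0 : ℝ) 1) : segPoint z₀ w s - conj w ∈ slitPlane := by
  have hseg : 0 < (segPoint z₀ w s).im := segPoint_mem hz₀ hw hs
  have hw' : 0 < w.im := hw
  refine mem_slitPlane_iff.2 (Or.inr (ne_of_gt ?_))
  simp only [sub_im, conj_im]
  linarith

lemma continuous_segPoint : Continuous fun p : ℂ × ℝ => segPoint z₀ p.1 p.2 := by
  unfold segPoint
  fun_prop

lemma ContinuousOn.comp_segPoint {G : ℂ → ℂ} (hG : ContinuousOn G upperHalfSet)
    (hz₀ : z₀ ∈ upperHalfSet) :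
    ContinuousOn (fun p : ℂ × ℝ => G (segPoint z₀ p.1 p.2)) (upperHalfSet ×ˢ Icc 0 1) :=
  hG.comp continuous_segPoint.continuousOn fun _ hp => segPoint_mem hz₀ hp.1 hp.2

lemma continuousOn_segPoint_sub_conj_cpow (c : ℂ) (hz₀ : z₀ ∈ upperHalfSet) :
    ContinuousOn (fun p : ℂ × ℝ => (segPoint z₀ p.1 p.2 - conj p.1) ^ c)
      (upperHalfSet ×ˢ Icc 0 1) :=
  (continuous_segPoint.sub (continuous_conj.comp continuous_fst)).continuousOn.cpow_const
    fun _ hp => segPoint_sub_conj_mem_slitPlane hz₀ hp.1 hp.2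

variable {F}

lemma continuousOn_periodIntegrand (hF : DifferentiableOn ℂ F upperHalfSet)
    (hz₀ : z₀ ∈ upperHalfSet) :
    ContinuousOn (uncurry (periodIntegrand r F z₀)) (upperHalfSet ×ˢ Icc 0 1) :=
  (((continuous_fst.sub continuous_const).continuousOn.mul
    (continuousOn_segPoint_sub_conj_cpow (r - 2) hz₀)).mul (hF.continuousOn.comp_segPoint hz₀))

lemma continuousOn_periodIntegrandDz (hF : DifferentiableOn ℂ F upperHalfSet)
    (hz₀ : z₀ ∈ upperHalfSet) :
    ContinuousOn (uncurry (periodIntegrandDz r F z₀)) (upperHalfSet ×ˢ Icc 0 1) := by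
  have hpow := continuousOn_segPoint_sub_conj_cpow (r - 2) hz₀
  have hFseg := hF.continuousOn.comp_segPoint hz₀
  exact (hpow.mul hFseg).add
    (((continuous_ofReal.comp continuous_snd).mul
      (continuous_fst.sub continuous_const)).continuousOn.mul
      (((continuousOn_const.mul (continuousOn_segPoint_sub_conj_cpow (r - 3) hz₀)).mul hFseg).add
        (hpow.mul ((hF.analyticOnNhd isOpen_upperHalfSet).deriv.continuousOn.comp_segPoint hz₀))))

lemma continuousOn_periodIntegrandDzbar (hF : DifferentiableOn ℂ F upperHalfSet)
    (hz₀ : z₀ ∈ upperHalfSet) :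
    ContinuousOn (uncurry (periodIntegrandDzbar r F z₀)) (upperHalfSet ×ˢ Icc 0 1) :=
  ((((continuous_const.mul (continuous_fst.sub continuous_const)).continuousOn.mul
    (continuousOn_segPoint_sub_conj_cpow (r - 3) hz₀)).mul (hF.continuousOn.comp_segPoint hz₀)).neg)

lemma hasFDerivAt_periodIntegrand (hF : DifferentiableOn ℂ F upperHalfSet)
    (hz₀ : z₀ ∈ upperHalfSet) {w : ℂ} (hw : w ∈ upperHalfSet) {s : ℝ} (hs : s ∈ Icc (0 : ℝ) 1) :
    HasFDerivAt (periodIntegrand r F z₀ · s)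
      (wirtingerCLM (periodIntegrandDz r F z₀ w s) (periodIntegrandDzbar r F z₀ w s)) w := by
  have hlin : HasFDerivAt (fun w : ℂ => w - z₀) (wirtingerCLM 1 0) w :=
    ((hasDerivAt_id w).sub_const z₀).hasFDerivAt_wirtingerCLM
  have hseg : HasFDerivAt (segPoint z₀ · s) (wirtingerCLM s 0) w := by
    simpa [segPoint] using
      ((((hasDerivAt_id w).sub_const z₀).const_mul (s : ℂ)).const_add z₀).hasFDerivAt_wirtingerCLM
  have hbase : HasFDerivAt (fun w => segPoint z₀ w s - conj w) (wirtingerCLM s (-1)) w :=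
    (hseg.sub hasFDerivAt_conj_wirtingerCLM).congr_fderiv (by rw [wirtingerCLM_sub]; norm_num)
  have hpow := (hasStrictDerivAt_cpow_const (c := r - 2)
    (segPoint_sub_conj_mem_slitPlane hz₀ hw hs)).hasDerivAt.comp_hasFDerivAt_wirtingerCLM w hbase
  have hFseg :=
    (hF.differentiableAt (isOpen_upperHalfSet.mem_nhds (segPoint_mem hz₀ hw hs))).hasDerivAt
    |>.comp_hasFDerivAt_wirtingerCLM w hseg
  refine ((hlin.mul_wirtingerCLM hpow).mul_wirtingerCLM hFseg).congr_fderiv ?_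
  rw [show r - 2 - 1 = r - 3 by ring, periodIntegrandDz, periodIntegrandDzbar]
  congr 1 <;> ring

lemma hasDerivAt_periodIntegrandDz_primitive (hF : DifferentiableOn ℂ F upperHalfSet)
    (hz₀ : z₀ ∈ upperHalfSet) {w : ℂ} (hw : w ∈ upperHalfSet) {s : ℝ} (hs : s ∈ Icc (0 : ℝ) 1) :
    HasDerivAt (fun t : ℝ => (t : ℂ) * ((segPoint z₀ w t - conj w) ^ (r - 2) * F (segPoint z₀ w t)))
      (periodIntegrandDz r F z₀ w s) s := by
  have hseg : HasDerivAt (segPoint z₀ w) (w - z₀) s :=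
    (((hasDerivAt_id s).ofReal_comp.mul_const (w - z₀)).const_add z₀).congr_deriv (by simp)
  have hψ := ((((hasDerivAt_id _).sub_const (conj w)).cpow_const (c := r - 2)
    (segPoint_sub_conj_mem_slitPlane hz₀ hw hs)).mul
    (hF.differentiableAt (isOpen_upperHalfSet.mem_nhds (segPoint_mem hz₀ hw hs))).hasDerivAt)
  refine ((hasDerivAt_id s).ofReal_comp.mul (hψ.comp s hseg)).congr_deriv ?_
  rw [show r - 2 - 1 = r - 3 by ring]
  simp only [periodIntegrandDz, segPoint, Function.comp_apply, Pi.mul_apply, id_eq, ofReal_one,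
    one_mul, mul_one]
  ring

lemma integral_periodIntegrandDz (hF : DifferentiableOn ℂ F upperHalfSet)
    (hz₀ : z₀ ∈ upperHalfSet) {w : ℂ} (hw : w ∈ upperHalfSet) :
    ∫ s in (0 : ℝ)..1, periodIntegrandDz r F z₀ w s = (w - conj w) ^ (r - 2) * F w := by
  rw [intervalIntegral.integral_eq_sub_of_hasDerivAt
    (fun s hs => hasDerivAt_periodIntegrandDz_primitive r hF hz₀ hw
      (by rwa [uIcc_of_le zero_le_one] at hs))
    (((continuousOn_periodIntegrandDz r hF hz₀).uncurry_left w hw).intervalIntegrable_of_Icc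
      zero_le_one)]
  simp [segPoint]

/-- `segInt r F z₀ w (conj w)` is by definition `∫ s in 0..1, periodIntegrand r F z₀ w s`. -/
lemma hasFDerivAt_segInt_conj (hF : DifferentiableOn ℂ F upperHalfSet)
    (hz₀ : z₀ ∈ upperHalfSet) {z : ℂ} (hz : z ∈ upperHalfSet) :
    HasFDerivAt (fun w => segInt r F z₀ w (conj w))
      (wirtingerCLM ((z - conj z) ^ (r - 2) * F z)
        (∫ s in (0 : ℝ)..1, periodIntegrandDzbar r F z₀ z s)) z := by
  have hD : ContinuousOn (uncurry fun w s =>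
      wirtingerCLM (periodIntegrandDz r F z₀ w s) (periodIntegrandDzbar r F z₀ w s))
      (upperHalfSet ×ˢ Icc 0 1) :=
    (continuousOn_periodIntegrandDz r hF hz₀).wirtingerCLM
      (continuousOn_periodIntegrandDzbar r hF hz₀)
  have h := hasFDerivAt_intervalIntegral_of_continuousOn zero_le_one isOpen_upperHalfSet
    (continuousOn_periodIntegrand r hF hz₀) hD
    (fun w hw s hs => hasFDerivAt_periodIntegrand r hF hz₀ hw hs) hz
  rwa [intervalIntegral_wirtingerCLM
    (((continuousOn_periodIntegrandDz r hF hz₀).uncurry_left z hz).intervalIntegrable_of_Icc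
      zero_le_one)
    (((continuousOn_periodIntegrandDzbar r hF hz₀).uncurry_left z hz).intervalIntegrable_of_Icc
      zero_le_one),
    integral_periodIntegrandDz r hF hz₀ hz] at h

end PeriodIntegral

section ConjPeriodIntegral

variable {r : ℂ} {F : ℂ → ℂ} {z₀ z : ℂ}

lemma wderivBar_conj_segInt (hF : DifferentiableOn ℂ F upperHalfSet) (hz₀ : z₀ ∈ upperHalfSet)
    (hz : z ∈ upperHalfSet) :
    wderivBar (fun w => conj (segInt r F z₀ w (conj w))) z =
      conj ((z - conj z) ^ (r - 2) * F z) := by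
  rw [wderivBar_conj, (hasFDerivAt_segInt_conj r hF hz₀ hz).wderiv_eq]

lemma wderivBar_cpow_sub_conj_mul (hF : DifferentiableOn ℂ F upperHalfSet)
    (hz : z ∈ upperHalfSet) :
    wderivBar (fun w => (w - conj w) ^ (r - 2) * F w) z =
      -((r - 2) * (z - conj z) ^ (r - 3) * F z) := by
  have hbase : HasFDerivAt (fun w => w - conj w) (wirtingerCLM 1 (-1)) z :=
    ((hasDerivAt_id z).hasFDerivAt_wirtingerCLM.sub hasFDerivAt_conj_wirtingerCLM).congr_fderiv
      (by rw [wirtingerCLM_sub]; norm_num)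
  have hpow := (hasStrictDerivAt_cpow_const (c := r - 2)
    (sub_conj_mem_slitPlane hz)).hasDerivAt.comp_hasFDerivAt_wirtingerCLM z hbase
  have hFz :=
    (hF.differentiableAt (isOpen_upperHalfSet.mem_nhds hz)).hasDerivAt.hasFDerivAt_wirtingerCLM
  rw [(hpow.mul_wirtingerCLM hFz).wderivBar_eq, show r - 2 - 1 = r - 3 by ring]
  ring

lemma wderiv_wderivBar_conj_segInt (hF : DifferentiableOn ℂ F upperHalfSet)
    (hz₀ : z₀ ∈ upperHalfSet) (hz : z ∈ upperHalfSet) :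
    wderiv (wderivBar fun w => conj (segInt r F z₀ w (conj w))) z =
      conj (-((r - 2) * (z - conj z) ^ (r - 3) * F z)) := by
  have h : (wderivBar fun w => conj (segInt r F z₀ w (conj w))) =ᶠ[𝓝 z]
      fun w => conj ((w - conj w) ^ (r - 2) * F w) :=
    eventually_of_mem (isOpen_upperHalfSet.mem_nhds hz) fun w hw => wderivBar_conj_segInt hF hz₀ hw
  rw [h.wderiv_eq, wderiv_conj, wderivBar_cpow_sub_conj_mul hF hz]

end ConjPeriodIntegral

theorem CQF_harmonic_and_shadow_general (r : ℂ)
    (F : ℂ → ℂ) (hF : DifferentiableOn ℂ F {z : ℂ | 0 < z.im})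
    (z₀ : ℂ) (hz₀ : 0 < z₀.im) :
    (∀ z : ℂ, 0 < z.im →
        hlaplacian (2 - starRingEnd ℂ r)
          (fun w => starRingEnd ℂ (segInt r F z₀ w (starRingEnd ℂ w))) z = 0) ∧
    (∀ z : ℂ, 0 < z.im →
        shadowOp (2 - starRingEnd ℂ r)
            (fun w => starRingEnd ℂ (segInt r F z₀ w (starRingEnd ℂ w))) z =
          (2 : ℂ) ^ (r - 1) * Complex.exp ((Real.pi : ℂ) * Complex.I * (r - 1) / 2) * F z) :=
  ⟨fun z hz => hlaplacian_eq_zero_of_wderivBar hz (wderivBar_conj_segInt hF hz₀ hz)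
    (wderiv_wderivBar_conj_segInt hF hz₀ hz),
   fun z hz => shadowOp_eq_of_wderivBar hz (wderivBar_conj_segInt hF hz₀ hz)⟩

/-- for `F ∈ A_r(Γ,v)` the function `(𝒞Q_F)(z) = conj (Q_F z̄)` on the
upper half-plane (where `Q_F t = ∫_{z₀}^{t̄} (z-t)^(r-2) F z dz`, so
`(𝒞Q_F)(z) = conj (∫_{z₀}^{z} (τ - z̄)^(r-2) F τ dτ)`) is `(2-r̄)`-harmonic, and
`ξ_{2-r̄}(𝒞Q_F)(z) = 2^(r-1) e^(πi(r-1)/2) F z`. -/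
theorem CQF_harmonic_and_shadow (r : ℂ)
    (Γ : Subgroup (Matrix.SpecialLinearGroup (Fin 2) ℝ))
    (v : Matrix.SpecialLinearGroup (Fin 2) ℝ → ℂ)
    (F : ℂ → ℂ) (hF : DifferentiableOn ℂ F {z : ℂ | 0 < z.im})
    (hauto : ∀ γ ∈ Γ, ∀ z : ℂ, 0 < z.im →
        F (mact γ z) = v γ * mdenom γ z ^ r * F z)
    (z₀ : ℂ) (hz₀ : 0 < z₀.im) :
    (∀ z : ℂ, 0 < z.im →
        hlaplacian (2 - starRingEnd ℂ r)
          (fun w => starRingEnd ℂ (segInt r F z₀ w (starRingEnd ℂ w))) z = 0) ∧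
    (∀ z : ℂ, 0 < z.im →
        shadowOp (2 - starRingEnd ℂ r)
            (fun w => starRingEnd ℂ (segInt r F z₀ w (starRingEnd ℂ w))) z =
          (2 : ℂ) ^ (r - 1) * Complex.exp ((Real.pi : ℂ) * Complex.I * (r - 1) / 2) * F z) :=
  CQF_harmonic_and_shadow_general r F hF z₀ hz₀
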